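/- Let d ≥ 1 and let X_1, …, X_d be independent random variables, each uniformly distributed on a set of 2d bins. Let f(X_1,…,X_d) denote the number of indices i such that X_i ≠ X_j for all j ≠ i. Then for every ε > 0, the probability that f < (e^(-1/2) - ε)·d is at most exp(-ε²·d/2). -/

import Mathlib

/-!
The law of `(X i)ᵢ` is uniform on `Fin d → Fin (2 * d)`, so every probability is a counting
ratio. The number `f` of singletons has mean `d (1 - 1/(2d))^(d-1) ≥ e^(-1/2) d`, and moving one
item changes `f` by at most `2`: the moved item may stop being alone, and at most one item that
was alone in its new bin stops being so. McDiarmid's inequality, proved by averaging out one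
coordinate at a time and applying Hoeffding's lemma to each step, then gives
`ℙ(f ≤ 𝔼 f - ε d) ≤ exp (-2 (ε d)² / (4 d))`.
-/

open MeasureTheory ProbabilityTheory Finset Real
open scoped BigOperators ENNReal

lemma integral_uniformOfFintype {κ : Type*} [Fintype κ] [Nonempty κ] [MeasurableSpace κ]
    [MeasurableSingletonClass κ] (f : κ → ℝ) :
    ∫ z, f z ∂(PMF.uniformOfFintype κ).toMeasure = 𝔼 z, f z := by
  simp [PMF.integral_eq_sum, Fintype.expect_eq_sum_div_card, div_eq_inv_mul, mul_sum]

lemma expect_exp_mul_le_of_mem_Icc {κ : Type*} [Fintype κ] [Nonempty κ] {Y : κ → ℝ} {a b : ℝ}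
    (hY : ∀ z, Y z ∈ Set.Icc a b) (hY₀ : 𝔼 z, Y z = 0) (t : ℝ) :
    𝔼 z, exp (t * Y z) ≤ exp (t ^ 2 * (b - a) ^ 2 / 8) := by
  let _ : MeasurableSpace κ := ⊤
  have hsub := hasSubgaussianMGF_of_mem_Icc_of_integral_eq_zero
    (μ := (PMF.uniformOfFintype κ).toMeasure) (measurable_of_countable Y).aemeasurable
    (ae_of_all _ hY) (by rwa [integral_uniformOfFintype])
  convert hsub.mgf_le t using 2
  · rw [mgf, integral_uniformOfFintype]
  · push_cast
    rw [Real.norm_eq_abs, div_pow, sq_abs]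
    ring

def HasBoundedDifferences {ι κ : Type*} [DecidableEq ι] (g : (ι → κ) → ℝ) (c : ℝ) : Prop :=
  ∀ x i y, g x - g (Function.update x i y) ≤ c

section McDiarmid

variable {κ : Type*} [Fintype κ] {n : ℕ}

lemma expect_fin_cons {M : Type*} [AddCommMonoid M] [Module ℚ≥0 M] (g : (Fin (n + 1) → κ) → M) :
    𝔼 x, g x = 𝔼 y : Fin n → κ, 𝔼 z : κ, g (Fin.cons z y) := by
  rw [← Fintype.expect_equiv (Fin.consEquiv fun _ => κ) (fun p => g (Fin.cons p.1 p.2)) g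
    fun _ => rfl, ← univ_product_univ, expect_product, expect_comm]

variable [Nonempty κ]

namespace HasBoundedDifferences

lemma expect_cons {g : (Fin (n + 1) → κ) → ℝ} {c : ℝ} (hg : HasBoundedDifferences g c) :
    HasBoundedDifferences (fun y : Fin n → κ => 𝔼 z, g (Fin.cons z y)) c := by
  intro y i w
  calc 𝔼 z, g (Fin.cons z y) - 𝔼 z, g (Fin.cons z (Function.update y i w))
      = 𝔼 z, (g (Fin.cons z y) - g (Function.update (Fin.cons z y) i.succ w)) := by
        simp only [Fin.cons_update, expect_sub_distrib]
    _ ≤ 𝔼 _z : κ, c := expect_le_expect fun z _ => hg _ _ _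
    _ = c := expect_const univ_nonempty c

lemma exists_forall_cons_mem_Icc {g : (Fin (n + 1) → κ) → ℝ} {c : ℝ}
    (hg : HasBoundedDifferences g c) (y : Fin n → κ) :
    ∃ a, ∀ z, g (Fin.cons z y) ∈ Set.Icc a (a + c) := by
  obtain ⟨z₀, hz₀⟩ := Finite.exists_min fun z => g (Fin.cons z y)
  refine ⟨g (Fin.cons z₀ y), fun z => ⟨hz₀ z, ?_⟩⟩
  have hdiff := hg (Fin.cons z y) 0 z₀
  rw [Fin.update_cons_zero] at hdiff
  linarith

/-- Averaging out the first coordinate, the inner average is Hoeffding's lemma and the outer one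
the induction hypothesis. -/
theorem expect_exp_mul_expect_sub_le {g : (Fin n → κ) → ℝ} {c : ℝ}
    (hg : HasBoundedDifferences g c) (t : ℝ) :
    𝔼 x, exp (t * (𝔼 x', g x' - g x)) ≤ exp (n * (t ^ 2 * c ^ 2 / 8)) := by
  induction n with
  | zero => simp [Subsingleton.elim _ (default : Fin 0 → κ)]
  | succ n ih =>
    set h : (Fin n → κ) → ℝ := fun y => 𝔼 z, g (Fin.cons z y)
    have hinner (y : Fin n → κ) :
        𝔼 z, exp (t * (h y - g (Fin.cons z y))) ≤ exp (t ^ 2 * c ^ 2 / 8) := by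
      obtain ⟨a, ha⟩ := hg.exists_forall_cons_mem_Icc y
      have hmem (z : κ) : h y - g (Fin.cons z y) ∈ Set.Icc (h y - (a + c)) (h y - a) :=
        ⟨by linarith [(ha z).2], by linarith [(ha z).1]⟩
      have hmean : 𝔼 z, (h y - g (Fin.cons z y)) = 0 := by
        rw [expect_sub_distrib, expect_const univ_nonempty, sub_self]
      convert expect_exp_mul_le_of_mem_Icc hmem hmean t using 3
      ring
    calc 𝔼 x, exp (t * (𝔼 x', g x' - g x))
        = 𝔼 y, exp (t * (𝔼 y', h y' - h y)) * 𝔼 z, exp (t * (h y - g (Fin.cons z y))) := by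
          rw [expect_fin_cons]
          refine expect_congr rfl fun y _ => ?_
          rw [mul_expect]
          refine expect_congr rfl fun z _ => ?_
          rw [← exp_add, ← expect_fin_cons]
          ring_nf
      _ ≤ 𝔼 y, exp (t * (𝔼 y', h y' - h y)) * exp (t ^ 2 * c ^ 2 / 8) :=
          expect_le_expect fun y _ => by gcongr; exact hinner y
      _ ≤ exp (n * (t ^ 2 * c ^ 2 / 8)) * exp (t ^ 2 * c ^ 2 / 8) := by
          rw [← expect_mul]; gcongr; exact ih hg.expect_cons
      _ = exp ((n + 1 : ℕ) * (t ^ 2 * c ^ 2 / 8)) := by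
          rw [← exp_add]; push_cast; ring_nf

theorem card_le_expect_sub_div_le {g : (Fin n → κ) → ℝ} {c : ℝ}
    (hg : HasBoundedDifferences g c) {s : ℝ} (hs : 0 ≤ s) :
    (#{x | g x ≤ 𝔼 x', g x' - s} : ℝ) / Fintype.card κ ^ n
      ≤ exp (-(2 * s ^ 2 / (n * c ^ 2))) := by
  -- the minimiser of `-t s + n t² c² / 8`
  set t := 4 * s / (n * c ^ 2)
  have ht : 0 ≤ t := by positivity
  have hind (x : Fin n → κ) : (if g x ≤ 𝔼 x', g x' - s then 1 else 0 : ℝ)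
      ≤ exp (-(t * s)) * exp (t * (𝔼 x', g x' - g x)) := by
    rw [← exp_add]
    split_ifs with hx
    · exact one_le_exp (by nlinarith)
    · positivity
  calc (#{x | g x ≤ 𝔼 x', g x' - s} : ℝ) / Fintype.card κ ^ n
      = 𝔼 x, (if g x ≤ 𝔼 x', g x' - s then 1 else 0 : ℝ) := by
        simp [Fintype.expect_eq_sum_div_card, sum_boole]
    _ ≤ exp (-(t * s)) * 𝔼 x, exp (t * (𝔼 x', g x' - g x)) := by
        rw [mul_expect]; exact expect_le_expect fun x _ => hind x
    _ ≤ exp (-(t * s)) * exp (n * (t ^ 2 * c ^ 2 / 8)) := by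
        gcongr; exact hg.expect_exp_mul_expect_sub_le t
    _ = exp (-(2 * s ^ 2 / (n * c ^ 2))) := by
        rw [← exp_add]
        rcases eq_or_ne ((n : ℝ) * c ^ 2) 0 with h | h
        · simp [t, h]
        · congr 1; simp only [t]; field_simp; ring

end HasBoundedDifferences

end McDiarmid

def singletons {ι κ : Type*} [Fintype ι] [DecidableEq ι] [DecidableEq κ] (x : ι → κ) :
    Finset ι :=
  {i | ∀ j, j ≠ i → x j ≠ x i}

section Singletons

variable {ι κ : Type*} [Fintype ι] [DecidableEq ι] [DecidableEq κ]

lemma mem_singletons {x : ι → κ} {i : ι} : i ∈ singletons x ↔ ∀ j, j ≠ i → x j ≠ x i := by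
  simp [singletons]

lemma singletons_sdiff_singletons_update_subset (x : ι → κ) (k : ι) (y : κ) :
    singletons x \ singletons (Function.update x k y) ⊆ insert k {i ∈ singletons x | x i = y} := by
  intro i hi
  obtain ⟨hix, hix'⟩ := mem_sdiff.1 hi
  rw [mem_singletons] at hix hix'
  push Not at hix'
  obtain ⟨j, hji, hj⟩ := hix'
  rcases eq_or_ne i k with rfl | hik
  · exact mem_insert_self _ _
  rw [Function.update_of_ne hik] at hj
  obtain rfl : j = k := by
    by_contra hjk
    exact hix j hji (by rwa [Function.update_of_ne hjk] at hj)
  rw [Function.update_self] at hj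
  exact mem_insert_of_mem (mem_filter.2 ⟨mem_singletons.2 hix, hj.symm⟩)

lemma card_filter_singletons_eq_le_one (x : ι → κ) (y : κ) :
    #{i ∈ singletons x | x i = y} ≤ 1 := by
  refine card_le_one.2 fun i hi j hj => ?_
  rw [mem_filter, mem_singletons] at hi hj
  by_contra hij
  exact hj.1 i hij (hi.2.trans hj.2.symm)

lemma hasBoundedDifferences_card_singletons :
    HasBoundedDifferences (fun x : ι → κ => (#(singletons x) : ℝ)) 2 := by
  intro x k y
  set x' := Function.update x k y
  have hcard := calc #(singletons x)
      ≤ #(singletons x \ singletons x') + #(singletons x') := card_le_card_sdiff_add_card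
    _ ≤ #(insert k {i ∈ singletons x | x i = y}) + #(singletons x') := by
        gcongr; exact singletons_sdiff_singletons_update_subset x k y
    _ ≤ 2 + #(singletons x') := by
        gcongr
        exact (card_insert_le _ _).trans (by linarith [card_filter_singletons_eq_le_one x y])
  have hcard' := (Nat.cast_le (α := ℝ)).2 hcard
  push_cast at hcard'
  linarith

variable [Fintype κ]

lemma card_mem_singletons (i : ι) :
    #{x : ι → κ | i ∈ singletons x}
      = Fintype.card κ * (Fintype.card κ - 1) ^ (Fintype.card ι - 1) := by
  have hfiber (v : κ) : {x ∈ ({x : ι → κ | i ∈ singletons x} : Finset _) | x i = v}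
      = Fintype.piFinset fun j => {w | w = v ↔ j = i} := by
    ext x
    simp only [mem_filter, mem_univ, true_and, mem_singletons, Fintype.mem_piFinset]
    grind
  have hcard (v : κ) (j : ι) :
      #({w | w = v ↔ j = i} : Finset κ) = if j = i then 1 else Fintype.card κ - 1 := by
    split_ifs with hj
    · simp [hj, filter_eq']
    · simp [hj, filter_ne', card_erase_of_mem]
  rw [card_eq_sum_card_fiberwise (f := fun x => x i) (t := univ) fun _ _ => mem_univ _]
  simp only [hfiber, Fintype.card_piFinset, hcard, prod_ite, prod_const]
  simp [filter_ne']

lemma expect_card_singletons [Nonempty κ] :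
    𝔼 x : ι → κ, (#(singletons x) : ℝ)
      = Fintype.card ι * (1 - (Fintype.card κ : ℝ)⁻¹) ^ (Fintype.card ι - 1) := by
  have hN : (Fintype.card κ : ℝ) ≠ 0 := by positivity
  have hind (x : ι → κ) : (#(singletons x) : ℝ) = ∑ i, if i ∈ singletons x then 1 else 0 := by
    simp
  simp_rw [hind, expect_sum_comm, Fintype.expect_eq_sum_div_card, sum_boole, card_mem_singletons,
    sum_const, card_univ, nsmul_eq_mul, Fintype.card_fun]
  push_cast [Nat.cast_sub Fintype.card_pos]
  rcases Fintype.card ι with _ | n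
  · simp
  · rw [Nat.add_sub_cancel, pow_succ]
    field_simp
    rw [div_pow, mul_div_cancel₀ _ (pow_ne_zero n hN)]

end Singletons

lemma exp_neg_div_one_sub_le_one_sub {x : ℝ} (hx : x < 1) : exp (-(x / (1 - x))) ≤ 1 - x := by
  have h₀ : 0 < 1 - x := sub_pos.2 hx
  rw [exp_neg, inv_le_comm₀ (exp_pos _) h₀]
  calc (1 - x)⁻¹ = x / (1 - x) + 1 := by field_simp; ring
    _ ≤ exp (x / (1 - x)) := add_one_le_exp _

lemma exp_neg_half_le_one_sub_inv_two_mul_pow {d : ℕ} (hd : 1 ≤ d) :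
    exp (-(1 / 2)) ≤ (1 - (2 * d : ℝ)⁻¹) ^ (d - 1) := by
  have hd' : (1 : ℝ) ≤ d := by exact_mod_cast hd
  have hx : (2 * d : ℝ)⁻¹ < 1 := inv_lt_one_of_one_lt₀ (by linarith)
  have hexponent : (d - 1 : ℕ) * ((2 * d : ℝ)⁻¹ / (1 - (2 * d : ℝ)⁻¹)) ≤ 1 / 2 := by
    rw [Nat.cast_sub hd]
    field_simp
    rw [div_le_one (by linarith)]
    push_cast
    linarith
  calc exp (-(1 / 2)) ≤ exp (-((2 * d : ℝ)⁻¹ / (1 - (2 * d : ℝ)⁻¹))) ^ (d - 1) := by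
        rw [← exp_nat_mul, exp_le_exp]; linarith
    _ ≤ (1 - (2 * d : ℝ)⁻¹) ^ (d - 1) := by
        gcongr; exact exp_neg_div_one_sub_le_one_sub hx

lemma measure_mem_finset_eq_card_div_of_iIndepFun {ι κ Ω : Type*} [Fintype ι] [Fintype κ]
    [MeasurableSpace κ] [MeasurableSingletonClass κ] [MeasurableSpace Ω] {μ : Measure Ω}
    {X : ι → Ω → κ} (hmeas : ∀ i, Measurable (X i)) (hindep : iIndepFun X μ)
    (hunif : ∀ i b, μ {ω | X i ω = b} = (Fintype.card κ : ℝ≥0∞)⁻¹) (S : Finset (ι → κ)) :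
    μ {ω | (fun i => X i ω) ∈ S} = #S / Fintype.card κ ^ Fintype.card ι := by
  have hX : Measurable fun ω i => X i ω := measurable_pi_lambda _ hmeas
  have hatom (x : ι → κ) :
      μ.map (fun ω i => X i ω) {x} = (Fintype.card κ : ℝ≥0∞)⁻¹ ^ Fintype.card ι := by
    have hpre : (fun ω i => X i ω) ⁻¹' {x} = ⋂ i, X i ⁻¹' {x i} := by
      ext ω; simp [funext_iff]
    rw [Measure.map_apply hX (measurableSet_singleton x), hpre,
      hindep.meas_iInter fun i => ⟨{x i}, measurableSet_singleton _, rfl⟩]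
    simp [Set.preimage, hunif]
  calc μ {ω | (fun i => X i ω) ∈ S} = μ.map (fun ω i => X i ω) S := by
        rw [Measure.map_apply hX S.measurableSet]; rfl
    _ = #S / Fintype.card κ ^ Fintype.card ι := by
        rw [← sum_measure_singleton, sum_congr rfl fun x _ => hatom x, sum_const, nsmul_eq_mul,
          ← ENNReal.inv_pow, div_eq_mul_inv]

theorem mcdiarmid_singletons_general
    {d : ℕ} (hd : 1 ≤ d)
    {Ω : Type*} [MeasurableSpace Ω] (μ : Measure Ω)
    (X : Fin d → Ω → Fin (2 * d))
    (hmeas : ∀ i, Measurable (X i))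
    (hindep : iIndepFun X μ)
    (hunif : ∀ i, ∀ b : Fin (2 * d), μ {ω | X i ω = b} = ((2 * d : ℕ) : ENNReal)⁻¹)
    (ε : ℝ) (hε : 0 < ε) :
    (μ {ω | ((Finset.univ.filter
        (fun i : Fin d => ∀ j, j ≠ i → X j ω ≠ X i ω)).card : ℝ)
          < (Real.exp (-(1 / 2)) - ε) * d}).toReal
      ≤ Real.exp (-(ε ^ 2 * d) / 2) := by
  have : Nonempty (Fin (2 * d)) := ⟨⟨0, by omega⟩⟩
  set F : (Fin d → Fin (2 * d)) → ℝ := fun x => #(singletons x)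
  have hmean : exp (-(1 / 2)) * d ≤ 𝔼 x, F x := by
    rw [expect_card_singletons, Fintype.card_fin, Fintype.card_fin, mul_comm]
    push_cast
    gcongr
    exact exp_neg_half_le_one_sub_inv_two_mul_pow hd
  have hevent : ({x | F x < (exp (-(1 / 2)) - ε) * d} : Finset _)
      ⊆ ({x | F x ≤ 𝔼 x', F x' - ε * d} : Finset _) := by
    intro x hx
    simp only [mem_filter, mem_univ, true_and] at hx ⊢
    linarith
  have hprob := measure_mem_finset_eq_card_div_of_iIndepFun hmeas hindep
    (by simpa using hunif) {x | F x < (exp (-(1 / 2)) - ε) * d}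
  rw [Fintype.card_fin] at hprob
  calc _ = (#{x | F x < (exp (-(1 / 2)) - ε) * d} : ℝ) / Fintype.card (Fin (2 * d)) ^ d := by
        convert congrArg ENNReal.toReal hprob using 1
        · congr 2; ext ω; simp [F, singletons]
        · simp [ENNReal.toReal_div]
    _ ≤ (#{x | F x ≤ 𝔼 x', F x' - ε * d} : ℝ) / Fintype.card (Fin (2 * d)) ^ d := by
        gcongr ?_ / _; exact_mod_cast card_le_card hevent
    _ ≤ exp (-(2 * (ε * d) ^ 2 / (d * 2 ^ 2))) :=
        hasBoundedDifferences_card_singletons.card_le_expect_sub_div_le (by positivity)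
    _ = exp (-(ε ^ 2 * d) / 2) := by congr 1; field_simp

/-- Let `d ≥ 1` and let `X 1, …, X d` be independent random variables, each uniform on a
set of `2d` bins.  Let `f` count the indices `i` with `X i ≠ X j` for all `j ≠ i`.  Then
for every `ε > 0`, `ℙ(f < (e^(-1/2) - ε) · d) ≤ exp(-ε² d / 2)` (McDiarmid). -/
theorem mcdiarmid_singletons
    {d : ℕ} (hd : 1 ≤ d)
    {Ω : Type*} [MeasurableSpace Ω] (μ : Measure Ω) [IsProbabilityMeasure μ]
    (X : Fin d → Ω → Fin (2 * d))
    (hmeas : ∀ i, Measurable (X i))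
    (hindep : iIndepFun X μ)
    (hunif : ∀ i, ∀ b : Fin (2 * d), μ {ω | X i ω = b} = ((2 * d : ℕ) : ENNReal)⁻¹)
    (ε : ℝ) (hε : 0 < ε) :
    (μ {ω | ((Finset.univ.filter
        (fun i : Fin d => ∀ j, j ≠ i → X j ω ≠ X i ω)).card : ℝ)
          < (Real.exp (-(1 / 2)) - ε) * d}).toReal
      ≤ Real.exp (-(ε ^ 2 * d) / 2) :=
  mcdiarmid_singletons_general hd μ X hmeas hindep hunif ε hε
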